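/- Av(312)𝒜 = Av(3142, 4132). -/

import Mathlib

/-- A permutation of length `n` (a bijection of `{0, …, n-1}`, identified with the
sequence of its values), packaged with its length. -/
abbrev PermSig : Type := Σ n : ℕ, Equiv.Perm (Fin n)

/-- Pattern containment: the permutation `α` of length `k` is contained in the
permutation `τ` of length `n` if there is an increasing choice of positions on which
`τ` is order-isomorphic to `α`. -/
def Contains {k n : ℕ} (α : Equiv.Perm (Fin k)) (τ : Equiv.Perm (Fin n)) : Prop :=
  ∃ f : Fin k ↪o Fin n, ∀ i j : Fin k, α i < α j ↔ τ (f i) < τ (f j)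

/-- The avoidance class `Av B`: all permutations containing no member of `B`. -/
def Av (B : Set PermSig) : Set PermSig :=
  {τ : PermSig | ∀ β ∈ B, ¬ Contains β.2 τ.2}

/-- A pattern class: a set of permutations downward closed under pattern containment. -/
def IsPatternClass (C : Set PermSig) : Prop :=
  ∀ (k n : ℕ) (α : Equiv.Perm (Fin k)) (τ : Equiv.Perm (Fin n)),
    Contains α τ → (⟨n, τ⟩ : PermSig) ∈ C → (⟨k, α⟩ : PermSig) ∈ C

/-- The base relation of the poset `P(τ)` on values: `x ≺ y` whenever `x` appears
before `y` in `τ` and either `x > y`, or some value `z` appears between `x` and `y`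
in `τ` with `x < y < z`. -/
def PQBase {n : ℕ} (τ : Equiv.Perm (Fin n)) (x y : Fin n) : Prop :=
  τ.symm x < τ.symm y ∧
    (y < x ∨ ∃ z : Fin n, τ.symm x < τ.symm z ∧ τ.symm z < τ.symm y ∧ x < y ∧ y < z)

/-- The poset `P(τ)`: the transitive closure of the base relation. -/
def PQ {n : ℕ} (τ : Equiv.Perm (Fin n)) : Fin n → Fin n → Prop :=
  Relation.TransGen (PQBase τ)

/-- `σ` is a linear extension of `P(τ)`; equivalently, `(σ, τ)` is an allowable pair,
i.e. a priority queue can produce output `τ` from input `σ`. -/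
def Allowable {n : ℕ} (σ τ : Equiv.Perm (Fin n)) : Prop :=
  ∀ x y : Fin n, PQ τ x y → σ.symm x < σ.symm y

/-- `C𝒜`: the set of permutations obtainable by a priority queue from an input in `C`. -/
def ImageA (C : Set PermSig) : Set PermSig :=
  {τ : PermSig | ∃ σ : Equiv.Perm (Fin τ.1), (⟨τ.1, σ⟩ : PermSig) ∈ C ∧ Allowable σ τ.2}

/-- The pattern `312` (written 0-indexed). -/
noncomputable def p312 : Equiv.Perm (Fin 3) :=
  Equiv.ofBijective (![2, 0, 1] : Fin 3 → Fin 3) (by decide)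

/-- The pattern `3142` (written 0-indexed). -/
noncomputable def p3142 : Equiv.Perm (Fin 4) :=
  Equiv.ofBijective (![2, 0, 3, 1] : Fin 4 → Fin 4) (by decide)

/-- The pattern `4132` (written 0-indexed). -/
noncomputable def p4132 : Equiv.Perm (Fin 4) :=
  Equiv.ofBijective (![3, 0, 2, 1] : Fin 4 → Fin 4) (by decide)

/-!
If `σ` avoids `312` and is a linear extension of `P(τ)`, an occurrence `a b c d` of `3142` or
`4132` in `τ` gives `a ≺ b ≺ d` in `P(τ)` (the second because of the larger `c` between them), so
`σ` lists `a, b, d` in this order: a `312`.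

Conversely, let `M x` be the largest value occurring in `τ` no later than `x`. If `τ` avoids both
patterns, the intervals `[x, M x]` are laminar, and then ordering the values so that `y > x`
precedes `x` exactly when `y ≤ M x` is a strict total order. It extends `P(τ)`, and it has no `312`:
`c, a, b` in this order with `a < b < c` would give `c ≤ M a < b`.
-/

theorem exists_equiv_fin_lt_iff {α : Type*} [Fintype α] {k : ℕ} (hk : Fintype.card α = k)
    (r : α → α → Prop) [IsStrictTotalOrder α r] :
    ∃ e : α ≃ Fin k, ∀ x y, e x < e y ↔ r x y := by
  classical
  let := linearOrderOfSTO r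
  exact ⟨(Fintype.orderIsoFinOfCardEq α hk).symm.toEquiv, fun x y =>
    (Fintype.orderIsoFinOfCardEq α hk).symm.lt_iff_lt⟩

section Laminar

variable {α : Type*} [LinearOrder α] (M : α → α)

def laminarLT (x y : α) : Prop :=
  (x < y ∧ M x < y) ∨ (y < x ∧ x ≤ M y)

variable {M}

theorem laminarLT_trans (hM : ∀ x z, x < z → z ≤ M x → M z ≤ M x) {x y z : α}
    (hxy : laminarLT M x y) (hyz : laminarLT M y z) : laminarLT M x z := by
  rcases hxy with ⟨hxy, hMx⟩ | ⟨hyx, hxMy⟩ <;> rcases hyz with ⟨hyz, hMy⟩ | ⟨hzy, hyMz⟩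
  · exact .inl ⟨hxy.trans hyz, hMx.trans hyz⟩
  · rcases lt_trichotomy z x with hzx | rfl | hxz
    · exact .inr ⟨hzx, hxy.le.trans hyMz⟩
    · exact absurd (hMx.trans_le hyMz) (lt_irrefl _)
    · exact .inl ⟨hxz, lt_of_not_ge fun hzMx => (hyMz.trans (hM x z hxz hzMx)).not_gt hMx⟩
  · exact .inl ⟨hxMy.trans_lt hMy, (hM y x hyx hxMy).trans_lt hMy⟩
  · exact .inr ⟨hzy.trans hyx, hxMy.trans (hM z y hzy hyMz)⟩

theorem isStrictTotalOrder_laminarLT (hM : ∀ x z, x < z → z ≤ M x → M z ≤ M x) :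
    IsStrictTotalOrder α (laminarLT M) where
  trichotomous x y hxy hyx := by
    by_contra hne
    rcases lt_or_gt_of_ne hne with h | h
    · exact hxy (.inl ⟨h, lt_of_not_ge fun h' => hyx (.inr ⟨h, h'⟩)⟩)
    · exact hyx (.inl ⟨h, lt_of_not_ge fun h' => hxy (.inr ⟨h, h'⟩)⟩)
  irrefl x := by rintro (⟨h, -⟩ | ⟨h, -⟩) <;> exact h.false
  trans _ _ _ := laminarLT_trans hM

theorem lt_of_laminarLT_of_laminarLT {a b c : α} (hlt : a < b) (hca : laminarLT M c a)
    (hab : laminarLT M a b) : c < b := by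
  rcases hca with ⟨hca, -⟩ | ⟨-, hcMa⟩
  · exact hca.trans hlt
  · rcases hab with ⟨-, hMab⟩ | ⟨hba, -⟩
    · exact hcMa.trans_lt hMab
    · exact absurd hlt hba.not_gt

end Laminar

theorem mem_av_singleton_iff {k n : ℕ} {β : Equiv.Perm (Fin k)} {σ : Equiv.Perm (Fin n)} :
    (⟨n, σ⟩ : PermSig) ∈ Av {⟨k, β⟩} ↔ ¬ Contains β σ := by
  simp [Av]

/-- A quadruple as below is an occurrence of `3142` (if `a < c`) or of `4132` (if `c < a`). -/
def NoForbiddenQuadruple {n : ℕ} (t : Equiv.Perm (Fin n)) : Prop :=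
  ∀ a b c d : Fin n, t.symm a < t.symm b → t.symm b < t.symm c → t.symm c < t.symm d →
    b < d → d < a → d < c → False

theorem contains_p312_iff {n : ℕ} {σ : Equiv.Perm (Fin n)} :
    Contains p312 σ ↔
      ∃ a b c : Fin n, σ.symm c < σ.symm a ∧ σ.symm a < σ.symm b ∧ a < b ∧ b < c := by
  constructor
  · rintro ⟨f, hf⟩
    refine ⟨σ (f 1), σ (f 2), σ (f 0), ?_, ?_, (hf 1 2).1 (by decide), (hf 2 0).1 (by decide)⟩ <;>
      simp [f.lt_iff_lt, Fin.lt_def]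
  · rintro ⟨a, b, c, hca, hab, hvab, hvbc⟩
    refine ⟨OrderEmbedding.ofStrictMono ![σ.symm c, σ.symm a, σ.symm b] (by simp [*]), ?_⟩
    intro i j
    fin_cases i <;> fin_cases j <;> simp [p312, Equiv.ofBijective] <;> omega

theorem mem_av_p3142_p4132_iff {n : ℕ} {t : Equiv.Perm (Fin n)} :
    (⟨n, t⟩ : PermSig) ∈ Av {(⟨4, p3142⟩ : PermSig), (⟨4, p4132⟩ : PermSig)} ↔
      NoForbiddenQuadruple t := by
  simp only [Av, Set.mem_insert_iff, Set.mem_singleton_iff, forall_eq_or_imp, forall_eq,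
    Set.mem_ofPred_eq, NoForbiddenQuadruple]
  constructor
  · rintro ⟨h3142, h4132⟩ a b c d hab hbc hcd hbd hda hdc
    let f := OrderEmbedding.ofStrictMono ![t.symm a, t.symm b, t.symm c, t.symm d] (by simp [*])
    rcases lt_or_gt_of_ne (show a ≠ c by rintro rfl; exact hbc.not_gt (by omega)) with hac | hca
    · refine h3142 ⟨f, fun i j => ?_⟩
      fin_cases i <;> fin_cases j <;> simp [f, p3142, Equiv.ofBijective] <;> omega
    · refine h4132 ⟨f, fun i j => ?_⟩
      fin_cases i <;> fin_cases j <;> simp [f, p4132, Equiv.ofBijective] <;> omega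
  · intro hF
    constructor <;> rintro ⟨f, hf⟩ <;>
      refine hF (t (f 0)) (t (f 1)) (t (f 2)) (t (f 3)) ?_ ?_ ?_ ((hf 1 3).1 (by decide))
        ((hf 3 0).1 (by decide)) ((hf 3 2).1 (by decide)) <;>
      simp [f.lt_iff_lt, Fin.lt_def]

section PrefixMax

variable {n : ℕ} (t : Equiv.Perm (Fin n))

noncomputable def prefixMax (x : Fin n) : Fin n :=
  (Finset.univ.filter fun y => t.symm y ≤ t.symm x).max' ⟨x, by simp⟩

variable {t}

theorem le_prefixMax {x y : Fin n} (h : t.symm y ≤ t.symm x) : y ≤ prefixMax t x :=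
  Finset.le_max' _ _ (by simp [h])

theorem symm_prefixMax_le (x : Fin n) : t.symm (prefixMax t x) ≤ t.symm x :=
  (Finset.mem_filter.1 (Finset.max'_mem (Finset.univ.filter fun y => t.symm y ≤ t.symm x) _)).2

theorem symm_prefixMax_lt {x : Fin n} (h : x < prefixMax t x) :
    t.symm (prefixMax t x) < t.symm x :=
  (symm_prefixMax_le x).lt_of_ne fun he => h.ne (t.symm.injective he).symm

theorem prefixMax_lt_of_noForbiddenQuadruple (hF : NoForbiddenQuadruple t) {x y w : Fin n}
    (hxw : t.symm x < t.symm w) (hwy : t.symm w < t.symm y) (hxy : x < y) (hyw : y < w) :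
    prefixMax t x < y := by
  by_contra! hyM
  have hyM' : y < prefixMax t x := by
    refine hyM.lt_of_ne ?_
    rintro rfl
    exact (symm_prefixMax_le x).not_gt (hxw.trans hwy)
  exact hF _ x w y (symm_prefixMax_lt (hxy.trans hyM')) hxw hwy hxy hyM' hyw

theorem prefixMax_le_prefixMax (hF : NoForbiddenQuadruple t) {x z : Fin n} (hxz : x < z)
    (hzM : z ≤ prefixMax t x) : prefixMax t z ≤ prefixMax t x := by
  by_contra! hM
  have hxMz : t.symm x < t.symm (prefixMax t z) :=
    lt_of_not_ge fun h => hM.not_ge (le_prefixMax h)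
  have hzMz : z < prefixMax t z := hzM.trans_lt hM
  exact hzM.not_gt
    (prefixMax_lt_of_noForbiddenQuadruple hF hxMz (symm_prefixMax_lt hzMz) hxz hzMz)

theorem laminarLT_prefixMax_of_pqBase (hF : NoForbiddenQuadruple t) {x y : Fin n}
    (h : PQBase t x y) : laminarLT (prefixMax t) x y := by
  obtain ⟨hxy, hyx | ⟨z, hxz, hzy, hxy', hyz⟩⟩ := h
  · exact .inr ⟨hyx, le_prefixMax hxy.le⟩
  · exact .inl ⟨hxy', prefixMax_lt_of_noForbiddenQuadruple hF hxz hzy hxy' hyz⟩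

end PrefixMax

theorem allowable_of_pqBase {n : ℕ} {σ τ : Equiv.Perm (Fin n)}
    (h : ∀ x y, PQBase τ x y → σ.symm x < σ.symm y) : Allowable σ τ := fun x y hxy => by
  simpa [Relation.transGen_eq_self] using hxy.lift σ.symm h

theorem noForbiddenQuadruple_of_allowable {n : ℕ} {σ τ : Equiv.Perm (Fin n)}
    (hσ : ¬ Contains p312 σ) (h : Allowable σ τ) : NoForbiddenQuadruple τ :=
  fun a b c d hab hbc hcd hbd hda hdc => hσ <| contains_p312_iff.2
    ⟨b, d, a, h a b (.single ⟨hab, .inl (hbd.trans hda)⟩),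
      h b d (.single ⟨hbc.trans hcd, .inr ⟨c, hbc, hcd, hbd, hdc⟩⟩), hbd, hda⟩

/-- `Av(312)𝒜 = Av(3142, 4132)`. -/
theorem imageA_av312 :
    ImageA (Av {(⟨3, p312⟩ : PermSig)}) = Av {(⟨4, p3142⟩ : PermSig), (⟨4, p4132⟩ : PermSig)} := by
  ext ⟨n, τ⟩
  simp only [ImageA, Set.mem_ofPred_eq, mem_av_singleton_iff, mem_av_p3142_p4132_iff]
  refine ⟨fun ⟨σ, hσ, h⟩ => noForbiddenQuadruple_of_allowable hσ h, fun hF => ?_⟩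
  have := isStrictTotalOrder_laminarLT fun _ _ => prefixMax_le_prefixMax hF
  obtain ⟨e, he⟩ := exists_equiv_fin_lt_iff (Fintype.card_fin n) (laminarLT (prefixMax τ))
  refine ⟨e.symm, ?_, allowable_of_pqBase fun x y h =>
    (he x y).2 (laminarLT_prefixMax_of_pqBase hF h)⟩
  rw [contains_p312_iff]
  rintro ⟨a, b, c, hca, hab, hlt, hbc⟩
  exact hbc.not_gt (lt_of_laminarLT_of_laminarLT hlt ((he c a).1 hca) ((he a b).1 hab))
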